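/- For every t ∈ ℂ with t ≠ 0, the Lie algebra on ℂ³ with brackets [f1,f3] = f1, [f2,f3] = f1 − f2, [f1,f2] = t·f3 is isomorphic to sl(2,ℂ). -/

import Mathlib

/-! With `e, f, h` the standard basis of `sl(2,ℂ)` (`[h,e] = 2e`, `[h,f] = -2f`, `[e,f] = h`), send
`f1 ↦ -(t/2) f`, `f2 ↦ e - (t/4) f`, `f3 ↦ h/2`. The defining brackets then follow from those of
`e, f, h`; for instance `[f1,f2] ↦ -(t/2) [f,e] = (t/2) h`. The images span `sl(2,ℂ)` as soon as
`t ≠ 0`, so the map is a linear isomorphism intertwining the brackets. -/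

def br (t : ℂ) (u v : Fin 3 → ℂ) : Fin 3 → ℂ :=
  fun k =>
    if k = 0 then (u 0 * v 2 - u 2 * v 0) + (u 1 * v 2 - u 2 * v 1)
    else if k = 1 then -(u 1 * v 2 - u 2 * v 1)
    else t * (u 0 * v 1 - u 1 * v 0)

open LieAlgebra.SpecialLinear

theorem LieAlgebra.SpecialLinear.mem_sl_fin_two_iff {R : Type*} [CommRing R]
    (X : Matrix (Fin 2) (Fin 2) R) :
    X ∈ sl (Fin 2) R ↔ X 0 0 + X 1 1 = 0 := by
  rw [← Matrix.trace_fin_two]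
  rfl

noncomputable def brMatrix (t : ℂ) (u : Fin 3 → ℂ) : Matrix (Fin 2) (Fin 2) ℂ :=
  !![u 2 / 2, u 1; -(t / 2) * u 0 - t / 4 * u 1, -(u 2 / 2)]

noncomputable def brToSl (t : ℂ) : (Fin 3 → ℂ) →ₗ[ℂ] sl (Fin 2) ℂ where
  toFun u := ⟨brMatrix t u, by simp [mem_sl_fin_two_iff, brMatrix]⟩
  map_add' u v := by
    ext i j
    fin_cases i <;> fin_cases j <;> simp [brMatrix] <;> ring
  map_smul' c u := by
    ext i j
    fin_cases i <;> fin_cases j <;> simp [brMatrix] <;> ring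

theorem brToSl_br (t : ℂ) (u v : Fin 3 → ℂ) :
    brToSl t (br t u v) = ⁅brToSl t u, brToSl t v⁆ := by
  ext i j
  rw [sl_bracket]
  fin_cases i <;> fin_cases j <;> simp [brToSl, brMatrix, br] <;> ring

noncomputable def slToBr (t : ℂ) (X : sl (Fin 2) ℂ) : Fin 3 → ℂ :=
  ![-(2 / t) * X.1 1 0 - X.1 0 1 / 2, X.1 0 1, 2 * X.1 0 0]

theorem slToBr_brToSl {t : ℂ} (ht : t ≠ 0) (u : Fin 3 → ℂ) : slToBr t (brToSl t u) = u := by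
  funext k
  fin_cases k <;> simp [slToBr, brToSl, brMatrix]
  · field_simp
    ring
  · ring

theorem brToSl_slToBr {t : ℂ} (ht : t ≠ 0) (X : sl (Fin 2) ℂ) : brToSl t (slToBr t X) = X := by
  have htr : X.1 1 1 = -X.1 0 0 := eq_neg_of_add_eq_zero_right ((mem_sl_fin_two_iff _).1 X.2)
  ext i j
  fin_cases i <;> fin_cases j <;> simp [slToBr, brToSl, brMatrix, htr]
  field_simp
  ring

noncomputable def brEquivSl {t : ℂ} (ht : t ≠ 0) : (Fin 3 → ℂ) ≃ₗ[ℂ] sl (Fin 2) ℂ :=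
  { brToSl t with
    invFun := slToBr t
    left_inv := slToBr_brToSl ht
    right_inv := brToSl_slToBr ht }

/-- For every `t ≠ 0` the resulting Lie algebra is isomorphic to `sl(2,ℂ)`. -/
theorem iso_sl2_of_t_ne_zero (t : ℂ) (ht : t ≠ 0) :
    ∃ g : (Fin 3 → ℂ) ≃ₗ[ℂ] ↥(LieAlgebra.SpecialLinear.sl (Fin 2) ℂ),
      ∀ u v, g (br t u v) = ⁅g u, g v⁆ :=
  ⟨brEquivSl ht, brToSl_br t⟩
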